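/- arXiv:2507.19010 — 2 statements merged into one kernel-verified Lean document; each statement's English description precedes it below -/
import Mathlib

section
/- Let a and b be natural numbers with a < 2^8 and b < 2^8, and for i = 0,…,7 let pp_i = 2^i · a · bit_i(b), where bit_i(b) ∈ {0,1} is the i-th bit of b. Define (with all 'mod' being remainders modulo 2^16, XOR/AND/OR bitwise, and maj(x,y,z) = (x AND y) OR (x AND z) OR (y AND z)): l1pp0 = (pp0 XOR pp1 XOR pp2) mod 2^16, l1pp1 = (2·maj(pp0,pp1,pp2)) mod 2^16, l1pp2 = (pp3 XOR pp4 XOR pp5) mod 2^16, l1pp3 = (2·maj(pp3,pp4,pp5)) mod 2^16; l2pp0 = (l1pp0 XOR l1pp1 XOR l1pp2) mod 2^16, l2pp1 = (2·maj(l1pp0,l1pp1,l1pp2)) mod 2^16, l2pp2 = (l1pp3 XOR pp6 XOR pp7) mod 2^16, l2pp3 = (2·maj(l1pp3,pp6,pp7)) mod 2^16; l3pp0 = (l2pp0 XOR l2pp1 XOR l2pp2) mod 2^16, l3pp1 = (2·maj(l2pp0,l2pp1,l2pp2)) mod 2^16, l3pp2 = l2pp3; l4pp0 = (l3pp0 XOR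 l3pp1 XOR l3pp2) mod 2^16, l4pp1 = (2·maj(l3pp0,l3pp1,l3pp2)) mod 2^16. Then (l4pp0 + l4pp1) mod 2^16 = a · b. -/
instance : XorOp ℤ := ⟨Int.xor⟩
instance : AndOp ℤ := ⟨Int.land⟩
instance : OrOp ℤ := ⟨Int.lor⟩


/-- Bitwise majority of three integers. -/
def maj (x y z : ℤ) : ℤ := ((x &&& y) ||| (x &&& z)) ||| (y &&& z)

/-!
A 3:2 compressor preserves the sum of its inputs: bitwise, `x ^^^ y ^^^ z` is the sum digit
and `maj x y z` the carry of a full adder, so `(x ^^^ y ^^^ z) + 2 * maj x y z = x + y + z`.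
Reducing modulo `2 ^ 16` keeps this true modulo `2 ^ 16`, so every level of the tree preserves
the sum of the live vectors modulo `2 ^ 16`, which starts out as `∑ pp_i = a * b`. As
`a * b < 2 ^ 16`, the final residue is `a * b` itself.
-/

namespace Nat

theorem xor_add_two_mul_and (x y : ℕ) : (x ^^^ y) + 2 * (x &&& y) = x + y := by
  induction x using Nat.binaryRec generalizing y with
  | zero => simp
  | bit b m ih =>
    induction y using Nat.binaryRec with
    | zero => simp
    | bit c n _ =>
      have := ih n
      rw [Nat.xor_bit, Nat.land_bit, Nat.bit_val, Nat.bit_val, Nat.bit_val, Nat.bit_val]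
      cases b <;> cases c <;> simp <;> omega

theorem xor_eq_add_of_and_eq_zero {x y : ℕ} (h : x &&& y = 0) : x ^^^ y = x + y := by
  simpa [h] using xor_add_two_mul_and x y

/-- The carry of a full adder is the disjoint union of the carries of its two half adders. -/
theorem maj_eq_xor_and_add_and (x y z : ℕ) :
    (x &&& y) ||| (x &&& z) ||| (y &&& z) = ((x ^^^ y) &&& z) + (x &&& y) := by
  have hdisj : ((x ^^^ y) &&& z) &&& (x &&& y) = 0 := by
    apply Nat.eq_of_testBit_eq; intro i
    simp only [Nat.testBit_xor, Nat.testBit_and, Nat.zero_testBit]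
    cases x.testBit i <;> cases y.testBit i <;> cases z.testBit i <;> rfl
  rw [← xor_eq_add_of_and_eq_zero hdisj]
  apply Nat.eq_of_testBit_eq; intro i
  simp only [Nat.testBit_xor, Nat.testBit_and, Nat.testBit_or]
  cases x.testBit i <;> cases y.testBit i <;> cases z.testBit i <;> rfl

theorem xor_xor_add_two_mul_maj (x y z : ℕ) :
    (x ^^^ y ^^^ z) + 2 * ((x &&& y) ||| (x &&& z) ||| (y &&& z)) = x + y + z := by
  have hxy := xor_add_two_mul_and x y
  have hxyz := xor_add_two_mul_and (x ^^^ y) z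
  rw [maj_eq_xor_and_add_and]
  omega

theorem sum_range_two_pow_mul_testBit (b n : ℕ) :
    ∑ i ∈ Finset.range n, 2 ^ i * (b.testBit i).toNat = b % 2 ^ n := by
  induction n with
  | zero => simp [Nat.mod_one]
  | succ n ih => rw [Finset.sum_range_succ, ih, Nat.toNat_testBit, Nat.mod_pow_succ]

end Nat

theorem xor_xor_add_two_mul_maj {x y z : ℤ} (hx : 0 ≤ x) (hy : 0 ≤ y) (hz : 0 ≤ z) :
    (x ^^^ y ^^^ z) + 2 * maj x y z = x + y + z := by
  lift x to ℕ using hx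
  lift y to ℕ using hy
  lift z to ℕ using hz
  -- on casts of naturals, the bitwise operations of `ℤ` reduce to those of `ℕ` by `rfl`
  exact congrArg ((↑) : ℕ → ℤ) (Nat.xor_xor_add_two_mul_maj x y z)

theorem xor_xor_emod_add_two_mul_maj_emod_modEq {x y z : ℤ} (hx : 0 ≤ x) (hy : 0 ≤ y)
    (hz : 0 ≤ z) (m : ℤ) :
    (x ^^^ y ^^^ z) % m + (2 * maj x y z) % m ≡ x + y + z [ZMOD m] := by
  rw [← xor_xor_add_two_mul_maj hx hy hz]
  exact (Int.mod_modEq _ m).add (Int.mod_modEq _ m)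

/-- End-to-end correctness of the 8×8 integer multiplier (computeProd). -/
theorem computeProd_correct (a b : ℕ) (ha : a < 2 ^ 8) (hb : b < 2 ^ 8) :
    let pp : ℕ → ℤ := fun i => 2 ^ i * (a : ℤ) * ((b.testBit i).toNat : ℤ)
    let l1pp0 := ((pp 0 ^^^ pp 1) ^^^ pp 2) % 2 ^ 16
    let l1pp1 := (2 * maj (pp 0) (pp 1) (pp 2)) % 2 ^ 16
    let l1pp2 := ((pp 3 ^^^ pp 4) ^^^ pp 5) % 2 ^ 16
    let l1pp3 := (2 * maj (pp 3) (pp 4) (pp 5)) % 2 ^ 16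
    let l2pp0 := ((l1pp0 ^^^ l1pp1) ^^^ l1pp2) % 2 ^ 16
    let l2pp1 := (2 * maj l1pp0 l1pp1 l1pp2) % 2 ^ 16
    let l2pp2 := ((l1pp3 ^^^ pp 6) ^^^ pp 7) % 2 ^ 16
    let l2pp3 := (2 * maj l1pp3 (pp 6) (pp 7)) % 2 ^ 16
    let l3pp0 := ((l2pp0 ^^^ l2pp1) ^^^ l2pp2) % 2 ^ 16
    let l3pp1 := (2 * maj l2pp0 l2pp1 l2pp2) % 2 ^ 16
    let l3pp2 := l2pp3
    let l4pp0 := ((l3pp0 ^^^ l3pp1) ^^^ l3pp2) % 2 ^ 16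
    let l4pp1 := (2 * maj l3pp0 l3pp1 l3pp2) % 2 ^ 16
    (l4pp0 + l4pp1) % 2 ^ 16 = (a : ℤ) * (b : ℤ) := by
  intro pp l1pp0 l1pp1 l1pp2 l1pp3 l2pp0 l2pp1 l2pp2 l2pp3 l3pp0 l3pp1 l3pp2 l4pp0 l4pp1
  have hp (i : ℕ) : 0 ≤ pp i := by positivity
  have hr (w : ℤ) : 0 ≤ w % 2 ^ 16 := Int.emod_nonneg w (by norm_num)
  have csa := @xor_xor_emod_add_two_mul_maj_emod_modEq
  have hsum : ∑ i ∈ Finset.range 8, pp i = a * b := by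
    have hbits := Nat.sum_range_two_pow_mul_testBit b 8
    rw [Nat.mod_eq_of_lt hb] at hbits
    simp only [pp, mul_comm _ (a : ℤ), mul_assoc, ← Finset.mul_sum]
    exact_mod_cast congrArg (a * ·) hbits
  have hlt : (a : ℤ) * b < 2 ^ 16 := by exact_mod_cast Nat.mul_lt_mul'' ha hb
  have hsum_modEq : l4pp0 + l4pp1 ≡ a * b [ZMOD 2 ^ 16] := calc
    l4pp0 + l4pp1 ≡ l3pp0 + l3pp1 + l2pp3 [ZMOD 2 ^ 16] := csa (hr _) (hr _) (hr _) _
    _ ≡ l2pp0 + l2pp1 + l2pp2 + l2pp3 [ZMOD 2 ^ 16] := (csa (hr _) (hr _) (hr _) _).add_right _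
    _ = l2pp0 + l2pp1 + (l2pp2 + l2pp3) := by ring
    _ ≡ l1pp0 + l1pp1 + l1pp2 + (l1pp3 + pp 6 + pp 7) [ZMOD 2 ^ 16] :=
      (csa (hr _) (hr _) (hr _) _).add (csa (hr _) (hp 6) (hp 7) _)
    _ = l1pp0 + l1pp1 + (l1pp2 + l1pp3) + (pp 6 + pp 7) := by ring
    _ ≡ pp 0 + pp 1 + pp 2 + (pp 3 + pp 4 + pp 5) + (pp 6 + pp 7) [ZMOD 2 ^ 16] :=
      ((csa (hp 0) (hp 1) (hp 2) _).add (csa (hp 3) (hp 4) (hp 5) _)).add_right _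
    _ = a * b := by rw [← hsum]; simp only [Finset.sum_range_succ, Finset.sum_range_zero]; ring
  rw [hsum_modEq]
  exact Int.emod_eq_of_lt (by positivity) hlt
end

section
/- For all integers x, y, z and every natural number n, ((((x XOR y XOR z) mod 2^n) + (((x AND y) OR (x AND z) OR (y AND z)) mod 2^(n−1)) · 2) mod 2^n) = (x + y + z) mod 2^n, for n ≥ 1. -/
/-!
Bitwise, a full adder turns input bits `a, b, c` into the sum bit `a ⊕ b ⊕ c` and the carry
bit `maj a b c`, with `a + b + c = (a ⊕ b ⊕ c) + 2 maj a b c`. Splitting off the lowest bits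
shows that the defect `x ⊕ y ⊕ z + 2 maj x y z - (x + y + z)` of the integer identity is twice
the defect at `x / 2, y / 2, z / 2`, so it is divisible by every power of two and vanishes.
The theorem then follows from the integer identity, since reducing the carry modulo `2 ^ (n - 1)`
before doubling it does not change its class modulo `2 ^ n`.
-/

namespace Int

theorem eq_zero_of_forall_two_pow_dvd {d : ℤ} (h : ∀ k : ℕ, (2 : ℤ) ^ k ∣ d) : d = 0 :=
  eq_zero_of_dvd_of_natAbs_lt_natAbs (h d.natAbs) (by simpa using Nat.lt_two_pow_self)

def fullAdderDefect (x y z : ℤ) : ℤ :=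
  Int.xor (Int.xor x y) z + 2 * lor (lor (land x y) (land x z)) (land y z) - (x + y + z)

theorem fullAdderDefect_bit (a b c : Bool) (x y z : ℤ) :
    fullAdderDefect (bit a x) (bit b y) (bit c z) = 2 * fullAdderDefect x y z := by
  simp only [fullAdderDefect, lxor_bit, land_bit, lor_bit]
  simp only [bit_val]
  cases a <;> cases b <;> cases c <;> simp <;> ring

theorem two_pow_dvd_fullAdderDefect (k : ℕ) (x y z : ℤ) : 2 ^ k ∣ fullAdderDefect x y z := by
  induction k generalizing x y z with
  | zero => exact one_dvd _
  | succ k ih =>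
    rw [← bit_decomp x, ← bit_decomp y, ← bit_decomp z, fullAdderDefect_bit, pow_succ']
    exact mul_dvd_mul_left 2 (ih _ _ _)

theorem xor_xor_add_maj_mul_two (x y z : ℤ) :
    ((x ^^^ y) ^^^ z) + ((x &&& y) ||| (x &&& z) ||| (y &&& z)) * 2 = x + y + z := by
  have h := eq_zero_of_forall_two_pow_dvd (two_pow_dvd_fullAdderDefect · x y z)
  rw [fullAdderDefect] at h
  change Int.xor (Int.xor x y) z + lor (lor (land x y) (land x z)) (land y z) * 2 = x + y + z
  linarith

end Int

theorem truncated_add3_shift_general (x y z : ℤ) (n : ℕ) :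
    ((((x ^^^ y) ^^^ z) % 2 ^ n)
        + ((((x &&& y) ||| (x &&& z)) ||| (y &&& z)) % 2 ^ (n - 1)) * 2) % 2 ^ n
      = (x + y + z) % 2 ^ n := by
  have hdvd : (2 : ℤ) ^ n ∣ 2 ^ (n - 1) * 2 := by
    rw [← pow_succ]
    exact pow_dvd_pow 2 (by omega)
  have hcarry := ((Int.mod_modEq ((x &&& y) ||| (x &&& z) ||| (y &&& z)) (2 ^ (n - 1))).mul_right'
    (c := 2)).of_dvd hdvd
  have hcongr := (Int.mod_modEq ((x ^^^ y) ^^^ z) (2 ^ n)).add hcarry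
  rw [hcongr, Int.xor_xor_add_maj_mul_two]

/-- Truncated 3:2 compressor step where the carry is truncated to n−1 bits before
    the left shift: the stage preserves the total sum modulo 2^n. -/
theorem truncated_add3_shift (x y z : ℤ) (n : ℕ) (hn : 1 ≤ n) :
    ((((x ^^^ y) ^^^ z) % 2 ^ n)
        + ((((x &&& y) ||| (x &&& z)) ||| (y &&& z)) % 2 ^ (n - 1)) * 2) % 2 ^ n
      = (x + y + z) % 2 ^ n :=
  truncated_add3_shift_general x y z n
end
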